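/- Let Q = [-1/2,1/2]², let v_j ∈ C¹(Q) with v_j → 0 in W^{1,1}(Q), let P(x₁,x₂) = x₁, Δ > 0, and A_j := {x ∈ Q : |v_j(x)| > Δ}. Then the one-dimensional Lebesgue measure of P(A_j) tends to 0 as j → ∞. -/

import Mathlib

/-!
On a vertical segment `{x₁} × I` of the unit square, `I = [-1/2, 1/2]`, the value of `v` at any
point is at most its value at another point of the segment plus `∫_I |∂₂v|`; averaging over the
other point, and using `|I| = 1`, gives `|v(x₁, x₂)| ≤ ∫_I (|v| + |∇v|)(x₁, ·)`. So every `x₁` in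
the projection of `{|v| > Δ}` has slice integral at least `Δ`, and Markov's inequality together
with Tonelli bounds `Δ · |P({|v| > Δ})|` by `‖v‖_{W^{1,1}(Q)}`.
-/

open Set Filter MeasureTheory

/-- The unit square Q = [-1/2,1/2]². -/
def Qsq : Set (ℝ × ℝ) := Icc (-1/2, -1/2) (1/2, 1/2)

open scoped ENNReal

section OneDim

variable {E : Type*} [NormedAddCommGroup E] [NormedSpace ℝ E] {f : ℝ → E} {a b : ℝ}

theorem enorm_sub_le_lintegral_deriv_of_mem_Icc (hf : ContDiffOn ℝ 1 f (Icc a b)) {s t : ℝ}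
    (hs : s ∈ Icc a b) (ht : t ∈ Icc a b) :
    ‖f s - f t‖ₑ ≤ ∫⁻ x in Icc a b, ‖deriv f x‖ₑ := by
  wlog hts : t ≤ s generalizing s t
  · rw [enorm_sub_rev]
    exact this ht hs (le_of_not_ge hts)
  have hsub : Icc t s ⊆ Icc a b := Icc_subset_Icc ht.1 hs.2
  exact (enorm_sub_le_lintegral_deriv_of_contDiffOn_Icc (hf.mono hsub) hts).trans
    (lintegral_mono_set hsub)

theorem enorm_mul_volume_le_lintegral_add (hf : ContDiffOn ℝ 1 f (Icc a b)) {s : ℝ}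
    (hs : s ∈ Icc a b) :
    ‖f s‖ₑ * volume (Icc a b) ≤
      (∫⁻ t in Icc a b, ‖f t‖ₑ) + (∫⁻ t in Icc a b, ‖deriv f t‖ₑ) * volume (Icc a b) := by
  set C := ∫⁻ t in Icc a b, ‖deriv f t‖ₑ
  calc ‖f s‖ₑ * volume (Icc a b) = ∫⁻ _ in Icc a b, ‖f s‖ₑ := (setLIntegral_const _ _).symm
    _ ≤ ∫⁻ t in Icc a b, (‖f t‖ₑ + C) := by
      refine setLIntegral_mono' measurableSet_Icc fun t ht => ?_
      calc ‖f s‖ₑ = ‖f t + (f s - f t)‖ₑ := by rw [add_sub_cancel]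
        _ ≤ ‖f t‖ₑ + ‖f s - f t‖ₑ := enorm_add_le _ _
        _ ≤ ‖f t‖ₑ + C := by gcongr; exact enorm_sub_le_lintegral_deriv_of_mem_Icc hf hs ht
    _ = (∫⁻ t in Icc a b, ‖f t‖ₑ) + C * volume (Icc a b) := by
      rw [lintegral_add_right _ measurable_const, setLIntegral_const]

end OneDim

theorem ContDiffOn.integrableOn_fderiv {E F : Type*} [NormedAddCommGroup E] [NormedSpace ℝ E]
    [FiniteDimensional ℝ E] [MeasurableSpace E] [BorelSpace E] {μ : Measure E}
    [μ.IsAddHaarMeasure] [NormedAddCommGroup F] [NormedSpace ℝ F] {v : E → F} {s : Set E}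
    (hv : ContDiffOn ℝ 1 v s) (hs : IsCompact s) (hconv : Convex ℝ s)
    (hint : (interior s).Nonempty) : IntegrableOn (fderiv ℝ v) s μ := by
  have hae : ∀ᵐ x ∂μ.restrict s, x ∈ interior s := by
    rw [Measure.restrict_congr_set
      (interior_ae_eq_of_null_frontier (hconv.addHaar_frontier μ)).symm]
    exact ae_restrict_mem isOpen_interior.measurableSet
  have hcont := hv.continuousOn_fderivWithin (uniqueDiffOn_convex hconv hint) le_rfl
  refine (hcont.integrableOn_compact hs).congr_fun_ae ?_
  filter_upwards [hae] with x hx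
  exact fderivWithin_of_mem_nhds (mem_interior_iff_mem_nhds.1 hx)

theorem mul_measure_le_lintegral_prod {α β : Type*} [MeasurableSpace α] [MeasurableSpace β]
    {μ : Measure α} {ν : Measure β} [SFinite ν] {G : α × β → ℝ≥0∞} (hG : AEMeasurable G (μ.prod ν))
    {S : Set α} {c : ℝ≥0∞} (hS : ∀ᵐ x ∂μ, x ∈ S → c ≤ ∫⁻ y, G (x, y) ∂ν) :
    c * μ S ≤ ∫⁻ z, G z ∂μ.prod ν := by
  calc c * μ S ≤ c * μ {x | c ≤ ∫⁻ y, G (x, y) ∂ν} := mul_le_mul_right (measure_mono_ae hS) c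
    _ ≤ ∫⁻ x, ∫⁻ y, G (x, y) ∂ν ∂μ := mul_meas_ge_le_lintegral₀ hG.lintegral_prod_right' c
    _ = ∫⁻ z, G z ∂μ.prod ν := (lintegral_prod G hG).symm

theorem Qsq_eq_prod : Qsq = Icc (-1/2 : ℝ) (1/2) ×ˢ Icc (-1/2) (1/2) := Icc_prod_eq _ _

theorem interior_Qsq : interior Qsq = Ioo (-1/2 : ℝ) (1/2) ×ˢ Ioo (-1/2) (1/2) := by
  rw [Qsq_eq_prod, interior_prod_eq, interior_Icc]

theorem volume_Icc_neg_half_half : volume (Icc (-1/2 : ℝ) (1/2)) = 1 := by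
  rw [Real.volume_Icc]; norm_num

theorem enorm_le_lintegral_vertical_slice {v : ℝ × ℝ → ℝ} (hv : ContDiffOn ℝ 1 v Qsq)
    {x : ℝ × ℝ} (hx : x ∈ Qsq) (hx₁ : x.1 ∈ Ioo (-1/2 : ℝ) (1/2)) :
    ‖v x‖ₑ ≤ ∫⁻ t in Icc (-1/2 : ℝ) (1/2), (‖v (x.1, t)‖ₑ + ‖fderiv ℝ v (x.1, t)‖ₑ) := by
  rw [Qsq_eq_prod] at hx
  set f : ℝ → ℝ := fun t => v (x.1, t)
  have hf : ContDiffOn ℝ 1 f (Icc (-1/2) (1/2)) :=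
    hv.comp (contDiff_prodMk_right x.1).contDiffOn fun t ht => Qsq_eq_prod ▸ ⟨hx.1, ht⟩
  have hderiv : ∀ t ∈ Ioo (-1/2 : ℝ) (1/2), ‖deriv f t‖ₑ ≤ ‖fderiv ℝ v (x.1, t)‖ₑ := by
    intro t ht
    have hmem : (x.1, t) ∈ interior Qsq := interior_Qsq ▸ ⟨hx₁, ht⟩
    have hvdiff : DifferentiableAt ℝ v (x.1, t) :=
      (hv.contDiffAt (mem_interior_iff_mem_nhds.1 hmem)).differentiableAt one_ne_zero
    have hf' : HasDerivAt f (fderiv ℝ v (x.1, t) (0, 1)) t :=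
      hvdiff.hasFDerivAt.comp_hasDerivAt t ((hasDerivAt_const t x.1).prodMk (hasDerivAt_id t))
    rw [hf'.deriv]
    refine ((fderiv ℝ v (x.1, t)).le_opENorm _).trans_eq ?_
    simp [enorm_eq_nnnorm, Prod.nnnorm_def]
  calc ‖v x‖ₑ = ‖f x.2‖ₑ * volume (Icc (-1/2 : ℝ) (1/2)) := by
        rw [volume_Icc_neg_half_half, mul_one]
    _ ≤ (∫⁻ t in Icc (-1/2 : ℝ) (1/2), ‖f t‖ₑ) +
          (∫⁻ t in Icc (-1/2 : ℝ) (1/2), ‖deriv f t‖ₑ) * volume (Icc (-1/2 : ℝ) (1/2)) :=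
        enorm_mul_volume_le_lintegral_add hf hx.2
    _ ≤ (∫⁻ t in Icc (-1/2 : ℝ) (1/2), ‖f t‖ₑ) +
          ∫⁻ t in Icc (-1/2 : ℝ) (1/2), ‖fderiv ℝ v (x.1, t)‖ₑ := by
        rw [volume_Icc_neg_half_half, mul_one, ← restrict_Ioo_eq_restrict_Icc]
        exact add_le_add_right (setLIntegral_mono' measurableSet_Ioo hderiv) _
    _ ≤ _ := le_lintegral_add _ _

theorem ofReal_mul_volume_fst_image_le {v : ℝ × ℝ → ℝ} (hv : ContDiffOn ℝ 1 v Qsq) (Δ : ℝ) :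
    ENNReal.ofReal Δ * volume (Prod.fst '' {x ∈ Qsq | Δ < |v x|}) ≤
      ENNReal.ofReal (∫ x in Qsq, (|v x| + ‖fderiv ℝ v x‖)) := by
  set I := Icc (-1/2 : ℝ) (1/2)
  set S := Prod.fst '' {x ∈ Qsq | Δ < |v x|}
  have hSI : S ⊆ I := by
    rintro _ ⟨x, ⟨hx, -⟩, rfl⟩
    exact (Qsq_eq_prod ▸ hx).1
  have hint : IntegrableOn (fun x => |v x| + ‖fderiv ℝ v x‖) Qsq :=
    (hv.continuousOn.abs.integrableOn_compact isCompact_Icc).add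
      (hv.integrableOn_fderiv isCompact_Icc (convex_Icc _ _)
        ⟨(0, 0), by rw [interior_Qsq]; norm_num⟩).norm
  have hmeas : AEMeasurable (fun x => ‖v x‖ₑ + ‖fderiv ℝ v x‖ₑ) (volume.restrict Qsq) :=
    (hv.continuousOn.enorm.aemeasurable measurableSet_Icc).add
      (measurable_fderiv ℝ v).enorm.aemeasurable
  have hprod : volume.restrict Qsq = (volume.restrict I).prod (volume.restrict I) := by
    rw [Qsq_eq_prod, Measure.volume_eq_prod, Measure.prod_restrict]
  have hIoo : ∀ᵐ x₁ ∂volume.restrict I, x₁ ∈ Ioo (-1/2 : ℝ) (1/2) := by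
    rw [← restrict_Ioo_eq_restrict_Icc]
    exact ae_restrict_mem measurableSet_Ioo
  have hslice : ∀ᵐ x₁ ∂volume.restrict I, x₁ ∈ S →
      ENNReal.ofReal Δ ≤ ∫⁻ t in I, (‖v (x₁, t)‖ₑ + ‖fderiv ℝ v (x₁, t)‖ₑ) := by
    filter_upwards [hIoo] with x₁ hx₁
    rintro ⟨x, ⟨hx, hΔ⟩, rfl⟩
    calc ENNReal.ofReal Δ ≤ ‖v x‖ₑ := by
          rw [← ofReal_norm]
          exact ENNReal.ofReal_le_ofReal hΔ.le
      _ ≤ _ := enorm_le_lintegral_vertical_slice hv hx hx₁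
  calc ENNReal.ofReal Δ * volume S = ENNReal.ofReal Δ * volume.restrict I S := by
        rw [Measure.restrict_eq_self _ hSI]
    _ ≤ ∫⁻ x in Qsq, (‖v x‖ₑ + ‖fderiv ℝ v x‖ₑ) :=
        hprod ▸ mul_measure_le_lintegral_prod (hprod ▸ hmeas) hslice
    _ = ENNReal.ofReal (∫ x in Qsq, (|v x| + ‖fderiv ℝ v x‖)) := by
        rw [ofReal_integral_eq_lintegral_ofReal hint (ae_of_all _ fun x => by positivity)]
        congr with x
        rw [ENNReal.ofReal_add (abs_nonneg _) (norm_nonneg _), ← Real.norm_eq_abs,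
          ofReal_norm, ofReal_norm]

theorem stmt18 (v : ℕ → ℝ × ℝ → ℝ) (Δ : ℝ) (hΔ : 0 < Δ)
    (hC1 : ∀ j, ContDiffOn ℝ 1 (v j) Qsq)
    (hW11 : Tendsto (fun j => ∫ x in Qsq, (|v j x| + ‖fderiv ℝ (v j) x‖))
      atTop (nhds 0)) :
    Tendsto (fun j => volume (Prod.fst '' {x ∈ Qsq | Δ < |v j x|}))
      atTop (nhds 0) := by
  have hΔ₀ : ENNReal.ofReal Δ ≠ 0 := (ENNReal.ofReal_pos.2 hΔ).ne'
  have hbound : ∀ j, volume (Prod.fst '' {x ∈ Qsq | Δ < |v j x|}) ≤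
      ENNReal.ofReal (∫ x in Qsq, (|v j x| + ‖fderiv ℝ (v j) x‖)) / ENNReal.ofReal Δ := fun j =>
    (ENNReal.le_div_iff_mul_le (Or.inl hΔ₀) (Or.inl ENNReal.ofReal_ne_top)).2 <|
      (mul_comm _ _).trans_le (ofReal_mul_volume_fst_image_le (hC1 j) Δ)
  have hlim : Tendsto (fun j => ENNReal.ofReal (∫ x in Qsq, (|v j x| + ‖fderiv ℝ (v j) x‖)) /
      ENNReal.ofReal Δ) atTop (nhds 0) := by
    simpa using ENNReal.Tendsto.div_const (ENNReal.tendsto_ofReal hW11) (Or.inr hΔ₀)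
  exact tendsto_of_tendsto_of_tendsto_of_le_of_le tendsto_const_nhds hlim (fun _ => zero_le)
    hbound
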